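/- arXiv:cs/0604095 — 2 statements merged into one kernel-verified Lean document; each statement's English description precedes it below -/
import Mathlib

section
/- Let G=(V,E) be a connected finite simple graph of order n, let k be a positive integer with prf(G) ≤ n−1+k, and let v ∈ V be a vertex of degree 2 whose two incident edges xv and yv are both bridges of order at least k+2. Let G' be the graph obtained from G by deleting v and adding the edge xy. Then prf(G) − n = prf(G') − (n−1); equivalently, prf(G) = prf(G') + 1. -/
set_option linter.unusedSectionVars false
set_option linter.unusedVariables false
set_option maxHeartbeats 1000000

open Finset

variable {V : Type*}

/-- The minimum position (in ordering `α`) over the closed neighborhood of `z`. -/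
noncomputable def nbhdMin {n : ℕ} (G : SimpleGraph V) (α : V ≃ Fin n) (z : V) : ℕ :=
  sInf {m : ℕ | ∃ w, (w = z ∨ G.Adj w z) ∧ (α w : ℕ) = m}

/-- The profile of a vertex `z` in the ordering `α`. -/
noncomputable def vtxProfile {n : ℕ} (G : SimpleGraph V) (α : V ≃ Fin n) (z : V) : ℕ :=
  (α z : ℕ) - nbhdMin G α z

/-- The profile of an ordering `α` of `G`. -/
noncomputable def ordProfile [Fintype V] {n : ℕ} (G : SimpleGraph V) (α : V ≃ Fin n) : ℕ :=
  ∑ z : V, vtxProfile G α z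

/-- The profile of a graph `G`. -/
noncomputable def profile (G : SimpleGraph V) [Fintype V] : ℕ :=
  sInf {p : ℕ | ∃ α : V ≃ Fin (Fintype.card V), ordProfile G α = p}
/-- The order of the bridge `uv`: the minimum number of vertices in a connected component
of `G - uv`. -/
noncomputable def bridgeOrd (G : SimpleGraph V) (u v : V) : ℕ :=
  min ((G.deleteEdges {s(u, v)}).connectedComponentMk u).supp.ncard
      ((G.deleteEdges {s(u, v)}).connectedComponentMk v).supp.ncard

noncomputable def H2 (G : SimpleGraph V) (v x y : V) : SimpleGraph V :=
  G.deleteEdges {s(x,v), s(y,v)}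

section General

variable {n : ℕ} (G : SimpleGraph V) (α : V ≃ Fin n)

lemma nbhdMin_le {w z : V} (h : w = z ∨ G.Adj w z) : nbhdMin G α z ≤ (α w : ℕ) :=
  Nat.sInf_le ⟨w, h, rfl⟩

lemma nbhdMin_le_self (z : V) : nbhdMin G α z ≤ (α z : ℕ) := nbhdMin_le G α (Or.inl rfl)

lemma nbhdMin_le_iff {z : V} {i : ℕ} :
    nbhdMin G α z ≤ i ↔ ∃ w, (w = z ∨ G.Adj w z) ∧ (α w : ℕ) ≤ i := by
  constructor
  · intro h
    have hne : {m : ℕ | ∃ w, (w = z ∨ G.Adj w z) ∧ (α w : ℕ) = m}.Nonempty :=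
      ⟨α z, z, Or.inl rfl, rfl⟩
    obtain ⟨w, hw, hval⟩ := Nat.sInf_mem hne
    exact ⟨w, hw, hval ▸ h⟩
  · rintro ⟨w, hw, hle⟩
    exact le_trans (nbhdMin_le G α hw) hle

noncomputable def crossers [Fintype V] (i : ℕ) : Finset V := by
  classical exact univ.filter (fun z => nbhdMin G α z ≤ i ∧ i < (α z : ℕ))

noncomputable def cutCount [Fintype V] (i : ℕ) : ℕ := (crossers G α i).card

lemma mem_crossers [Fintype V] {i : ℕ} {z : V} :
    z ∈ crossers G α i ↔ nbhdMin G α z ≤ i ∧ i < (α z : ℕ) := by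
  classical simp [crossers]

lemma ordProfile_eq_sum_cutCount [Fintype V] :
    ordProfile G α = ∑ i ∈ range n, cutCount G α i := by
  classical
  have h1 : ∀ z : V, vtxProfile G α z
      = ((range n).filter fun i => nbhdMin G α z ≤ i ∧ i < (α z : ℕ)).card := by
    intro z
    have hlt : (α z : ℕ) < n := (α z).isLt
    have : ((range n).filter fun i => nbhdMin G α z ≤ i ∧ i < (α z : ℕ))
        = Finset.Ico (nbhdMin G α z) ((α z : ℕ)) := by
      ext i
      simp only [mem_filter, mem_range, mem_Ico]
      omega
    rw [this, Nat.card_Ico]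
    rfl
  calc ordProfile G α
      = ∑ z : V, ((range n).filter fun i => nbhdMin G α z ≤ i ∧ i < (α z : ℕ)).card :=
        Finset.sum_congr rfl fun z _ => h1 z
    _ = ∑ z : V, ∑ i ∈ range n, if nbhdMin G α z ≤ i ∧ i < (α z : ℕ) then 1 else 0 :=
        Finset.sum_congr rfl fun z _ => Finset.card_filter _ _
    _ = ∑ i ∈ range n, ∑ z : V, if nbhdMin G α z ≤ i ∧ i < (α z : ℕ) then 1 else 0 :=
        Finset.sum_comm
    _ = ∑ i ∈ range n, cutCount G α i := by
        refine Finset.sum_congr rfl fun i _ => ?_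
        rw [cutCount, crossers, Finset.card_filter]

lemma cutCount_last_eq_zero [Fintype V] {i : ℕ} (hi : n ≤ i + 1) : cutCount G α i = 0 := by
  classical
  rw [cutCount, Finset.card_eq_zero, Finset.eq_empty_iff_forall_notMem]
  intro z hz
  rw [mem_crossers] at hz
  have := (α z).isLt
  omega

lemma exists_cross_edge {H : SimpleGraph V} {a b : V} (p : H.Walk a b) (P : V → Prop)
    (ha : P a) (hb : ¬ P b) :
    ∃ c d, H.Adj c d ∧ P c ∧ ¬ P d ∧ c ∈ p.support ∧ d ∈ p.support := by
  induction p with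
  | nil => exact absurd ha hb
  | @cons u c b h q ih =>
    by_cases hc : P c
    · obtain ⟨e, d, h1, h2, h3, h4, h5⟩ := ih hc hb
      exact ⟨e, d, h1, h2, h3, by simp [SimpleGraph.Walk.support_cons, h4],
        by simp [SimpleGraph.Walk.support_cons, h5]⟩
    · exact ⟨u, c, h, ha, hc, by simp, by simp [SimpleGraph.Walk.support_cons]⟩

lemma walk_support_side {H : SimpleGraph V} (Q : V → Prop)
    (hside : ∀ c d, H.Adj c d → Q c → Q d) {a b : V} (p : H.Walk a b) (ha : Q a) :
    ∀ z ∈ p.support, Q z := by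
  induction p with
  | nil => intro z hz; rw [SimpleGraph.Walk.support_nil, List.mem_singleton] at hz; exact hz ▸ ha
  | @cons u c b h q ih =>
    intro z hz
    rw [SimpleGraph.Walk.support_cons, List.mem_cons] at hz
    rcases hz with hz | hz
    · exact hz ▸ ha
    · exact ih (hside _ _ h ha) z hz

lemma cutCount_pos [Fintype V] {H : SimpleGraph V} (hconn : H.Connected) (α : V ≃ Fin n)
    {i : ℕ} (hi : i + 1 < n) : 0 < cutCount H α i := by
  classical
  have hn : 0 < n := by omega
  set a := α.symm ⟨0, hn⟩ with ha
  set b := α.symm ⟨n - 1, by omega⟩ with hb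
  obtain ⟨p⟩ := hconn.preconnected a b
  obtain ⟨c, d, hadj, hc, hd, -, -⟩ := exists_cross_edge p (fun z => (α z : ℕ) ≤ i)
    (by simp [ha]) (by simp [hb]; omega)
  rw [cutCount, Finset.card_pos]
  exact ⟨d, (mem_crossers H α).2 ⟨le_trans (nbhdMin_le H α (Or.inr hadj)) hc, by omega⟩⟩

end General


section Sides
variable [Fintype V] [DecidableEq V]
variable {G : SimpleGraph V} {v x y : V}

lemma adj_v_cases (hdeg : G.neighborSet v = {x, y}) {w : V} (h : G.Adj w v) :
    w = x ∨ w = y := by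
  have : w ∈ G.neighborSet v := (G.mem_neighborSet v w).2 h.symm
  rw [hdeg] at this
  simpa using this

lemma H2_adj {a b : V} :
    (H2 G v x y).Adj a b ↔ G.Adj a b ∧ s(a,b) ≠ s(x,v) ∧ s(a,b) ≠ s(y,v) := by
  simp [H2, SimpleGraph.deleteEdges_adj]

lemma H2_symm : H2 G v x y = H2 G v y x := by
  unfold H2
  congr 1
  exact Set.pair_comm _ _

lemma not_H2_adj_v (hdeg : G.neighborSet v = {x, y}) (a : V) : ¬ (H2 G v x y).Adj a v := by
  intro h
  obtain ⟨hadj, h1, h2⟩ := H2_adj.1 h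
  rcases adj_v_cases hdeg hadj with rfl | rfl
  · exact h1 rfl
  · exact h2 rfl

lemma H2_reach_v_eq (hdeg : G.neighborSet v = {x, y}) {w : V}
    (h : (H2 G v x y).Reachable v w) : v = w := by
  obtain ⟨p⟩ := h
  cases p with
  | nil => rfl
  | cons h q => exact absurd h.symm (not_H2_adj_v hdeg _)

lemma trichotomy (hG : G.Connected) (hdeg : G.neighborSet v = {x, y}) (w : V) :
    w = v ∨ (H2 G v x y).Reachable w x ∨ (H2 G v x y).Reachable w y := by
  have aux : ∀ {a b : V} (_ : G.Walk a b),
      (b = v ∨ (H2 G v x y).Reachable b x ∨ (H2 G v x y).Reachable b y) →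
      (a = v ∨ (H2 G v x y).Reachable a x ∨ (H2 G v x y).Reachable a y) := by
    intro a b p
    induction p with
    | nil => exact id
    | @cons a c b h q ih =>
      intro hb
      have hc := ih hb
      by_cases he : s(a, c) = s(x,v) ∨ s(a, c) = s(y,v)
      · rcases he with he | he <;> rw [Sym2.eq_iff] at he <;>
          rcases he with ⟨rfl, rfl⟩ | ⟨rfl, rfl⟩
        · exact Or.inr (Or.inl (SimpleGraph.Reachable.refl _))
        · exact Or.inl rfl
        · exact Or.inr (Or.inr (SimpleGraph.Reachable.refl _))
        · exact Or.inl rfl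
      · push_neg at he
        have hadj : (H2 G v x y).Adj a c := H2_adj.2 ⟨h, he.1, he.2⟩
        rcases hc with rfl | hc | hc
        · exact absurd hadj (not_H2_adj_v hdeg a)
        · exact Or.inr (Or.inl (hadj.reachable.trans hc))
        · exact Or.inr (Or.inr (hadj.reachable.trans hc))
  obtain ⟨p⟩ := hG.preconnected w x
  exact aux p (Or.inr (Or.inl (SimpleGraph.Reachable.refl _)))

lemma H2_le_delx : H2 G v x y ≤ G.deleteEdges {s(x,v)} := by
  intro a b hab
  obtain ⟨h, h1, _⟩ := H2_adj.1 hab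
  exact SimpleGraph.deleteEdges_adj.2 ⟨h, by simpa using h1⟩

lemma not_reach_bridge (hbx : G.IsBridge s(x,v)) :
    ¬ (G.deleteEdges {s(x,v)}).Reachable x v := by
  have := (SimpleGraph.isBridge_iff.1 hbx)
  exact this

lemma adj_yv_delx (hxy : x ≠ y) (hyv : G.Adj y v) : (G.deleteEdges {s(x,v)}).Adj y v := by
  refine SimpleGraph.deleteEdges_adj.2 ⟨hyv, ?_⟩
  simp only [Set.mem_singleton_iff, Sym2.eq_iff]
  push_neg
  constructor
  · intro h; exact absurd h hxy.symm
  · intro h; exact absurd h.symm hyv.ne'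

lemma not_reach_xy (hxy : x ≠ y) (hyv : G.Adj y v) (hbx : G.IsBridge s(x,v)) :
    ¬ (H2 G v x y).Reachable x y := by
  intro h
  have h' : (G.deleteEdges {s(x,v)}).Reachable x y := h.mono H2_le_delx
  exact not_reach_bridge hbx (h'.trans (adj_yv_delx hxy hyv).reachable)

noncomputable def sideA (G : SimpleGraph V) (v x y : V) : Finset V := by
  classical exact univ.filter (fun w => (H2 G v x y).Reachable w x)

lemma mem_sideA {w : V} : w ∈ sideA G v x y ↔ (H2 G v x y).Reachable w x := by
  classical simp [sideA]

lemma suppX (hG : G.Connected) (hxy : x ≠ y) (hyv : G.Adj y v)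
    (hdeg : G.neighborSet v = {x, y}) (hbx : G.IsBridge s(x,v)) :
    ((G.deleteEdges {s(x,v)}).connectedComponentMk x).supp = ↑(sideA G v x y) := by
  ext w
  rw [SimpleGraph.ConnectedComponent.mem_supp_iff, SimpleGraph.ConnectedComponent.eq]
  simp only [Finset.coe_filter, Set.mem_setOf_eq, Finset.mem_coe, mem_sideA]
  constructor
  · intro h
    rcases trichotomy hG hdeg w with rfl | h2 | h2
    · exact absurd h.symm (not_reach_bridge hbx)
    · exact h2
    · exfalso
      have h2' : (G.deleteEdges {s(x,v)}).Reachable w y := h2.mono H2_le_delx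
      exact not_reach_bridge hbx ((h.symm.trans h2').trans (adj_yv_delx hxy hyv).reachable)
  · intro h2
    exact h2.mono H2_le_delx

lemma suppV (hG : G.Connected) (hxy : x ≠ y) (hyv : G.Adj y v)
    (hdeg : G.neighborSet v = {x, y}) (hbx : G.IsBridge s(x,v)) :
    ((G.deleteEdges {s(x,v)}).connectedComponentMk v).supp
      = insert v ↑(sideA G v y x) := by
  ext w
  rw [SimpleGraph.ConnectedComponent.mem_supp_iff, SimpleGraph.ConnectedComponent.eq]
  rw [Set.mem_insert_iff, Finset.mem_coe, mem_sideA]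
  rw [show H2 G v y x = H2 G v x y from H2_symm]
  constructor
  · intro h
    rcases trichotomy hG hdeg w with rfl | h2 | h2
    · exact Or.inl rfl
    · exfalso
      have h2' : (G.deleteEdges {s(x,v)}).Reachable w x := h2.mono H2_le_delx
      exact not_reach_bridge hbx (h2'.symm.trans h)
    · exact Or.inr h2
  · rintro (rfl | h2)
    · exact SimpleGraph.Reachable.refl _
    · exact (h2.mono H2_le_delx).trans (adj_yv_delx hxy hyv).reachable

lemma v_not_mem_sideA (hdeg : G.neighborSet v = {x, y}) (hxv : G.Adj x v) :
    v ∉ sideA G v x y := by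
  rw [mem_sideA]
  intro h
  exact hxv.ne (H2_reach_v_eq hdeg h).symm

lemma bridgeOrd_eq (hG : G.Connected) (hxy : x ≠ y) (hxv : G.Adj x v) (hyv : G.Adj y v)
    (hdeg : G.neighborSet v = {x, y}) (hbx : G.IsBridge s(x,v)) :
    bridgeOrd G x v = min (sideA G v x y).card ((sideA G v y x).card + 1) := by
  unfold bridgeOrd
  rw [suppX hG hxy hyv hdeg hbx, suppV hG hxy hyv hdeg hbx]
  rw [Set.ncard_coe_finset]
  rw [Set.ncard_insert_of_notMem]
  · rw [Set.ncard_coe_finset]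
  rw [Finset.mem_coe]
  have hdeg' : G.neighborSet v = {y, x} := by rw [hdeg]; exact Set.pair_comm _ _
  exact v_not_mem_sideA hdeg' hyv

end Sides

def Gp (G : SimpleGraph V) (v x y : V) : SimpleGraph {w : V // w ≠ v} :=
  SimpleGraph.fromRel (fun a b : {w : V // w ≠ v} => G.Adj ↑a ↑b ∨ ((a : V) = x ∧ (b : V) = y))

lemma Gp_adj {G : SimpleGraph V} {v x y : V} {a b : {w : V // w ≠ v}} :
    (Gp G v x y).Adj a b ↔
      a ≠ b ∧ (G.Adj ↑a ↑b ∨ ((a:V) = x ∧ (b:V) = y) ∨ ((b:V) = x ∧ (a:V) = y)) := by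
  unfold Gp
  rw [SimpleGraph.fromRel_adj]
  constructor
  · rintro ⟨h1, h2⟩
    refine ⟨h1, ?_⟩
    rcases h2 with (h | h) | (h | h)
    · exact Or.inl h
    · exact Or.inr (Or.inl h)
    · exact Or.inl h.symm
    · exact Or.inr (Or.inr h)
  · rintro ⟨h1, h2⟩
    refine ⟨h1, ?_⟩
    rcases h2 with h | h | h
    · exact Or.inl (Or.inl h)
    · exact Or.inl (Or.inr h)
    · exact Or.inr (Or.inr h)

lemma Gadj_to_Gp {G : SimpleGraph V} {v x y : V} {a b : {w : V // w ≠ v}}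
    (h : G.Adj ↑a ↑b) : (Gp G v x y).Adj a b :=
  Gp_adj.2 ⟨fun he => h.ne (congrArg _ he), Or.inl h⟩

lemma card_succ [Fintype V] [DecidableEq V] (v : V) :
    Fintype.card V = Fintype.card {w : V // w ≠ v} + 1 := by
  classical
  have h1 : Fintype.card {w : V // ¬ (w = v)} = Fintype.card V - Fintype.card {w : V // w = v} :=
    Fintype.card_subtype_compl _
  have h2 : Fintype.card {w : V // w = v} = 1 := Fintype.card_subtype_eq v
  have h3 : 0 < Fintype.card V := Fintype.card_pos_iff.2 ⟨v⟩
  have h4 : Fintype.card {w : V // w ≠ v} = Fintype.card {w : V // ¬ (w = v)} := rfl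
  omega

lemma delete_step {n n' : ℕ} [Fintype V] [DecidableEq V] {G : SimpleGraph V} {v x y : V}
    (hG : G.Connected) (hxv : G.Adj x v) (hyv : G.Adj y v)
    (hcard : Fintype.card {w : V // w ≠ v} = n') (hn : n = n' + 1)
    (α : V ≃ Fin n) :
    ∃ β : {w : V // w ≠ v} ≃ Fin n',
      ordProfile (Gp G v x y) β + 1 ≤ ordProfile G α := by
  classical
  set p := (α v : ℕ) with hpd
  have hp : p < n := (α v).isLt
  have hne : ∀ z : {w : V // w ≠ v}, (α ↑z : ℕ) ≠ p := by
    intro z h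
    exact z.2 (α.injective (Fin.val_injective h))
  have hlt : ∀ z : {w : V // w ≠ v}, (α ↑z : ℕ) < n := fun z => (α (↑z : V)).isLt
  set f : {w : V // w ≠ v} → Fin n' := fun z =>
    ⟨if (α ↑z : ℕ) < p then (α ↑z : ℕ) else (α ↑z : ℕ) - 1, by
      have h1 := hlt z
      have h2 := hne z
      split_ifs <;> omega⟩ with hfd
  have hinj : Function.Injective f := by
    intro a b hab
    have h1 := hne a
    have h2 := hne b
    have h3 : (f a : ℕ) = (f b : ℕ) := congrArg Fin.val hab
    have h4 : (α ↑a : ℕ) = (α ↑b : ℕ) := by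
      simp only [hfd] at h3
      split_ifs at h3 <;> omega
    exact Subtype.ext (α.injective (Fin.val_injective h4))
  have hbij : Function.Bijective f :=
    (Fintype.bijective_iff_injective_and_card f).2 ⟨hinj, by simp [hcard]⟩
  set β : {w : V // w ≠ v} ≃ Fin n' := Equiv.ofBijective f hbij with hβd
  have hβval : ∀ z : {w : V // w ≠ v},
      (β z : ℕ) = if (α ↑z : ℕ) < p then (α ↑z : ℕ) else (α ↑z : ℕ) - 1 := fun z => rfl
  refine ⟨β, ?_⟩
  set ι : ℕ → ℕ := fun j => if j < p then j else j + 1 with hιd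
  set i0 : ℕ := min p (n - 2) with hi0d
  have hi0cases : (p ≤ n - 2 ∧ i0 = p) ∨ (¬ p ≤ n - 2 ∧ i0 = n - 2) := by
    rw [hi0d, min_def]
    split_ifs with h
    exacts [Or.inl ⟨h, rfl⟩, Or.inr ⟨h, rfl⟩]
  have key : ∀ j : ℕ, cutCount (Gp G v x y) β j ≤ cutCount G α (ι j) := by
    intro j
    have hwit : ∀ z ∈ crossers (Gp G v x y) β j,
        ¬(∃ w : V, (w = ↑z ∨ G.Adj w ↑z) ∧ (α w : ℕ) ≤ ι j) →
        ∃ w' : {w : V // w ≠ v}, (β w' : ℕ) ≤ j ∧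
          (((w' : V) = x ∧ (z : V) = y) ∨ ((z : V) = x ∧ (w' : V) = y)) := by
      intro z hz hP
      rw [mem_crossers] at hz
      obtain ⟨hz1, hz2⟩ := hz
      obtain ⟨w', hw', hw'le⟩ := (nbhdMin_le_iff _ _).1 hz1
      push_neg at hP
      rcases hw' with rfl | hadj'
      · omega
      · rw [Gp_adj] at hadj'
        have hwle : (α ↑w' : ℕ) ≤ ι j := by
          have h1 := hβval w'
          have h2 := hne w'
          simp only [hιd]
          rw [h1] at hw'le
          split_ifs at hw'le ⊢ <;> omega
        rcases hadj'.2 with h | h | h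
        · exact absurd (hP ↑w' (Or.inr h)) (not_lt.2 hwle)
        · exact ⟨w', hw'le, Or.inl h⟩
        · exact ⟨w', hw'le, Or.inr ⟨h.1, h.2⟩⟩
    apply Finset.card_le_card_of_injOn
      (fun z : {w : V // w ≠ v} =>
        if ∃ w : V, (w = ↑z ∨ G.Adj w ↑z) ∧ (α w : ℕ) ≤ ι j then (↑z : V) else v)
    · intro z hz
      simp only [Finset.mem_coe] at hz ⊢
      have hz' := hz
      rw [mem_crossers] at hz'
      obtain ⟨hz1, hz2⟩ := hz'
      by_cases hP : ∃ w : V, (w = ↑z ∨ G.Adj w ↑z) ∧ (α w : ℕ) ≤ ι j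
      · rw [if_pos hP, mem_crossers]
        refine ⟨(nbhdMin_le_iff _ _).2 hP, ?_⟩
        have hb : j < (β z : ℕ) := hz2
        rw [hβval] at hb
        have h1 := hne z
        simp only [hιd]
        split_ifs at hb ⊢ <;> omega
      · rw [if_neg hP, mem_crossers]
        obtain ⟨w', hw'le, hpair⟩ := hwit z hz hP
        push_neg at hP
        have hwle : (α ↑w' : ℕ) ≤ ι j := by
          have h1 := hβval w'
          have h2 := hne w'
          simp only [hιd]
          rw [h1] at hw'le
          split_ifs at hw'le ⊢ <;> omega
        have hadjwv : G.Adj ↑w' v := by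
          rcases hpair with ⟨h1, _⟩ | ⟨_, h2⟩
          · rw [h1]; exact hxv
          · rw [h2]; exact hyv
        have hadjvz : G.Adj v ↑z := by
          rcases hpair with ⟨_, h2⟩ | ⟨h1, _⟩
          · rw [h2]; exact hyv.symm
          · rw [h1]; exact hxv.symm
        constructor
        · exact le_trans (nbhdMin_le G α (Or.inr hadjwv)) hwle
        · have := hP v (Or.inr hadjvz)
          omega
    · intro a ha b hb hab
      rw [Finset.mem_coe] at ha hb
      simp only at hab
      by_cases hPa : ∃ w : V, (w = ↑a ∨ G.Adj w ↑a) ∧ (α w : ℕ) ≤ ι j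
      · by_cases hPb : ∃ w : V, (w = ↑b ∨ G.Adj w ↑b) ∧ (α w : ℕ) ≤ ι j
        · rw [if_pos hPa, if_pos hPb] at hab
          exact Subtype.ext hab
        · rw [if_pos hPa, if_neg hPb] at hab
          exact absurd hab a.2
      · by_cases hPb : ∃ w : V, (w = ↑b ∨ G.Adj w ↑b) ∧ (α w : ℕ) ≤ ι j
        · rw [if_neg hPa, if_pos hPb] at hab
          exact absurd hab.symm b.2
        · -- both exceptional
          obtain ⟨wa, hwa, hpa⟩ := hwit a ha hPa
          obtain ⟨wb, hwb, hpb⟩ := hwit b hb hPb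
          rw [mem_crossers] at ha hb
          by_cases hcoe : (a : V) = (b : V)
          · exact Subtype.ext hcoe
          · exfalso
            rcases hpa with ⟨ha1, ha2⟩ | ⟨ha1, ha2⟩ <;> rcases hpb with ⟨hb1, hb2⟩ | ⟨hb1, hb2⟩
            · exact hcoe (ha2.trans hb2.symm)
            · -- ↑a = y, ↑b = x, ↑wb = y so wb = a
              have : wb = a := Subtype.ext (hb2.trans ha2.symm)
              rw [this] at hwb
              omega
            · have : wa = b := Subtype.ext (ha2.trans hb2.symm)
              rw [this] at hwa
              omega
            · exact hcoe (ha1.trans hb1.symm)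
  -- sum assembly
  have hn'pos : 0 < n' := by
    rw [← hcard]
    exact Fintype.card_pos_iff.2 ⟨⟨x, hxv.ne⟩⟩
  have hsum1 : ordProfile (Gp G v x y) β = ∑ j ∈ range (n' - 1), cutCount (Gp G v x y) β j := by
    have h0 : cutCount (Gp G v x y) β (n' - 1) = 0 := cutCount_last_eq_zero _ β (by omega)
    have h1 : range n' = insert (n' - 1) (range (n' - 1)) := by
      ext t
      simp only [Finset.mem_insert, mem_range]
      omega
    rw [ordProfile_eq_sum_cutCount, h1, Finset.sum_insert (by simp), h0, zero_add]
  have hιinj : ∀ a ∈ range (n' - 1), ∀ b ∈ range (n' - 1), ι a = ι b → a = b := by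
    intro a _ b _ hab
    simp only [hιd] at hab
    split_ifs at hab <;> omega
  have himage : ∀ j ∈ range (n' - 1), ι j ≠ i0 := by
    intro j hj
    rw [mem_range] at hj
    simp only [hιd]
    rcases hi0cases with ⟨hA, hB⟩ | ⟨hA, hB⟩ <;> split_ifs <;> omega
  have hsub : insert i0 ((range (n' - 1)).image ι) ⊆ range n := by
    intro i hi
    rw [Finset.mem_insert] at hi
    rcases hi with rfl | hi
    · rw [mem_range]
      rcases hi0cases with ⟨hA, hB⟩ | ⟨hA, hB⟩ <;> omega
    · rw [Finset.mem_image] at hi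
      obtain ⟨j, hj, rfl⟩ := hi
      rw [mem_range] at hj ⊢
      simp only [hιd]
      split_ifs <;> omega
  have hc0 : 1 ≤ cutCount G α i0 := cutCount_pos hG α (by
    rcases hi0cases with ⟨hA, hB⟩ | ⟨hA, hB⟩ <;> omega)
  calc ordProfile (Gp G v x y) β + 1
      = (∑ j ∈ range (n' - 1), cutCount (Gp G v x y) β j) + 1 := by rw [hsum1]
    _ ≤ (∑ j ∈ range (n' - 1), cutCount G α (ι j)) + 1 :=
        Nat.add_le_add_right (Finset.sum_le_sum (fun j _ => key j)) 1
    _ = (∑ i ∈ (range (n' - 1)).image ι, cutCount G α i) + 1 := by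
        rw [Finset.sum_image hιinj]
    _ ≤ (∑ i ∈ (range (n' - 1)).image ι, cutCount G α i) + cutCount G α i0 :=
        Nat.add_le_add_left hc0 _
    _ = ∑ i ∈ insert i0 ((range (n' - 1)).image ι), cutCount G α i := by
        rw [Finset.sum_insert (by
          rw [Finset.mem_image]
          rintro ⟨j, hj, hje⟩
          exact himage j hj hje)]
        omega
    _ ≤ ∑ i ∈ range n, cutCount G α i :=
        Finset.sum_le_sum_of_subset hsub
    _ = ordProfile G α := (ordProfile_eq_sum_cutCount G α).symm


section Uncross

variable {W : Type*} [Fintype W] [DecidableEq W]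

lemma exists_crosser {n' : ℕ} {H K : SimpleGraph W} (β : W ≃ Fin n') (hKH : K ≤ H)
    (Q : W → Prop) (hQside : ∀ c d, K.Adj c d → Q c → Q d) {a b : W}
    (hr : K.Reachable a b) (hQa : Q a) {i : ℕ} (ha : (β a : ℕ) ≤ i) (hb : i < (β b : ℕ)) :
    ∃ d, d ∈ crossers H β i ∧ Q d := by
  obtain ⟨p⟩ := hr
  obtain ⟨c, d, hadj, hc, hd, _, hds⟩ := exists_cross_edge p (fun z => (β z : ℕ) ≤ i) ha
    (by omega)
  exact ⟨d, (mem_crossers H β).2 ⟨le_trans (nbhdMin_le H β (Or.inr (hKH hadj))) hc, by omega⟩,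
    walk_support_side Q hQside p hQa d hds⟩

lemma uncross_step {n' k : ℕ} {H : SimpleGraph W} {xs ys : W} {S : Finset W}
    (hcard : Fintype.card W = n') (hn'pos : 0 < n')
    (hxS : xs ∈ S) (hyT : ys ∉ S) (hadjxy : H.Adj xs ys)
    (hclass : ∀ a b : W, H.Adj a b → a ∈ S → b ∉ S → a = xs ∧ b = ys)
    (hHsS : ∀ a ∈ S, (H.deleteEdges {s(xs,ys)}).Reachable a xs)
    (hHsT : ∀ b, b ∉ S → (H.deleteEdges {s(xs,ys)}).Reachable b ys)
    (hHsSide : ∀ a b : W, (H.deleteEdges {s(xs,ys)}).Adj a b → (a ∈ S ↔ b ∈ S))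
    (hconn : H.Connected)
    (hTcard : k + 2 ≤ (Sᶜ : Finset W).card)
    (β : W ≃ Fin n') (h0 : β.symm ⟨0, hn'pos⟩ ∈ S)
    (hβ : ordProfile H β ≤ n' - 1 + k) :
    ∃ γ : W ≃ Fin n', ordProfile H γ ≤ ordProfile H β ∧
      ∀ z, ((γ z : ℕ) < S.card ↔ z ∈ S) := by
  classical
  set K := H.deleteEdges {s(xs,ys)} with hKdef
  have hKH : K ≤ H := SimpleGraph.deleteEdges_le _
  have hQS : ∀ c d, K.Adj c d → c ∈ S → d ∈ S := fun c d hcd hc => (hHsSide c d hcd).1 hc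
  have hQT : ∀ c d, K.Adj c d → c ∉ S → d ∉ S :=
    fun c d hcd hc hd => hc ((hHsSide c d hcd).2 hd)
  have hβinj : ∀ a b : W, (β a : ℕ) = (β b : ℕ) → a = b :=
    fun a b h => β.injective (Fin.val_injective h)
  set m := S.card with hm
  set rS : W → ℕ := fun z => (S.filter (fun w => (β w : ℕ) < (β z : ℕ))).card with hrS
  set rT : W → ℕ := fun z => (Sᶜ.filter (fun w => (β w : ℕ) < (β z : ℕ))).card with hrT
  have hrSlt : ∀ z ∈ S, rS z < m := by
    intro z hz
    exact Finset.card_lt_card (Finset.filter_ssubset.2 ⟨z, hz, by omega⟩)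
  have hrTlt : ∀ z ∈ Sᶜ, rT z < Sᶜ.card := by
    intro z hz
    exact Finset.card_lt_card (Finset.filter_ssubset.2 ⟨z, hz, by omega⟩)
  have hmn : m + Sᶜ.card = n' := by
    have h1 := Finset.card_compl (s := S) (α := W)
    have h2 := Finset.card_le_univ S
    have h3 : (Finset.univ : Finset W).card = n' := by rw [Finset.card_univ, hcard]
    omega
  have hmonoS : ∀ a ∈ S, ∀ b ∈ S, (β a : ℕ) < (β b : ℕ) → rS a < rS b := by
    intro a ha b hb hab
    apply Finset.card_lt_card
    rw [Finset.ssubset_def]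
    constructor
    · intro w hw
      rw [Finset.mem_filter] at hw ⊢
      exact ⟨hw.1, by omega⟩
    · intro hcon
      have := hcon (Finset.mem_filter.2 ⟨ha, hab⟩)
      rw [Finset.mem_filter] at this
      omega
  have hmonoT : ∀ a ∈ Sᶜ, ∀ b ∈ Sᶜ, (β a : ℕ) < (β b : ℕ) → rT a < rT b := by
    intro a ha b hb hab
    apply Finset.card_lt_card
    rw [Finset.ssubset_def]
    constructor
    · intro w hw
      rw [Finset.mem_filter] at hw ⊢
      exact ⟨hw.1, by omega⟩
    · intro hcon
      have := hcon (Finset.mem_filter.2 ⟨ha, hab⟩)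
      rw [Finset.mem_filter] at this
      omega
  have hmonoS' : ∀ a ∈ S, ∀ b ∈ S, rS a ≤ rS b → (β a : ℕ) ≤ (β b : ℕ) := by
    intro a ha b hb h
    by_contra hcon
    push_neg at hcon
    have := hmonoS b hb a ha hcon
    omega
  have hmonoT' : ∀ a ∈ Sᶜ, ∀ b ∈ Sᶜ, rT a ≤ rT b → (β a : ℕ) ≤ (β b : ℕ) := by
    intro a ha b hb h
    by_contra hcon
    push_neg at hcon
    have := hmonoT b hb a ha hcon
    omega
  have hmonoS'' : ∀ a ∈ S, ∀ b ∈ S, rS a < rS b → (β a : ℕ) < (β b : ℕ) := by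
    intro a ha b hb h
    rcases lt_or_eq_of_le (hmonoS' a ha b hb (le_of_lt h)) with h' | h'
    · exact h'
    · rw [hβinj a b h'] at h; omega
  have hmonoT'' : ∀ a ∈ Sᶜ, ∀ b ∈ Sᶜ, rT a < rT b → (β a : ℕ) < (β b : ℕ) := by
    intro a ha b hb h
    rcases lt_or_eq_of_le (hmonoT' a ha b hb (le_of_lt h)) with h' | h'
    · exact h'
    · rw [hβinj a b h'] at h; omega
  have hmlen' : m ≤ n' := by omega
  set f : W → Fin n' := fun z =>
    if h : z ∈ S then ⟨rS z, by have := hrSlt z h; omega⟩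
    else ⟨m + rT z, by have := hrTlt z (Finset.mem_compl.2 h); omega⟩ with hf
  have hfS : ∀ z ∈ S, (f z : ℕ) = rS z := by
    intro z hz; simp only [hf, dif_pos hz]
  have hfT : ∀ z, z ∉ S → (f z : ℕ) = m + rT z := by
    intro z hz; simp only [hf, dif_neg hz]
  have hinj : Function.Injective f := by
    intro a b hab
    have hv : (f a : ℕ) = (f b : ℕ) := congrArg Fin.val hab
    by_cases ha : a ∈ S <;> by_cases hb : b ∈ S
    · rw [hfS a ha, hfS b hb] at hv
      exact hβinj a b (le_antisymm (hmonoS' a ha b hb (by omega)) (hmonoS' b hb a ha (by omega)))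
    · rw [hfS a ha, hfT b hb] at hv
      have := hrSlt a ha; omega
    · rw [hfT a ha, hfS b hb] at hv
      have := hrSlt b hb; omega
    · rw [hfT a ha, hfT b hb] at hv
      have ha' := Finset.mem_compl.2 ha
      have hb' := Finset.mem_compl.2 hb
      exact hβinj a b (le_antisymm (hmonoT' a ha' b hb' (by omega)) (hmonoT' b hb' a ha' (by omega)))
  set γ : W ≃ Fin n' := Equiv.ofBijective f
    ((Fintype.bijective_iff_injective_and_card f).2 ⟨hinj, by simp [hcard]⟩) with hγ
  have hγS : ∀ z ∈ S, (γ z : ℕ) = rS z := hfS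
  have hγT : ∀ z, z ∉ S → (γ z : ℕ) = m + rT z := hfT
  have hsplit : ∀ z, ((γ z : ℕ) < m ↔ z ∈ S) := by
    intro z
    by_cases hz : z ∈ S
    · simp only [hγS z hz, hrSlt z hz, hz]
    · have := hγT z hz
      constructor
      · intro h; omega
      · intro h; exact absurd h hz
  -- extremal vertices
  have hTne : (Sᶜ : Finset W).Nonempty := Finset.card_pos.1 (by omega)
  obtain ⟨tM, htM, htMmax⟩ := Finset.exists_max_image Sᶜ (fun z => (β z : ℕ)) hTne
  obtain ⟨tr, htr, htrmin⟩ := Finset.exists_min_image Sᶜ (fun z => (β z : ℕ)) hTne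
  obtain ⟨sM, hsM, hsMmax⟩ := Finset.exists_max_image S (fun z => (β z : ℕ)) ⟨xs, hxS⟩
  set s0 := β.symm ⟨0, hn'pos⟩ with hs0def
  have hs0 : (β s0 : ℕ) = 0 := by simp [hs0def]
  have hs0S : s0 ∈ S := h0
  have htMS := Finset.mem_compl.1 htM
  -- the structural bound
  have hmaxlt : (β sM : ℕ) < (β tM : ℕ) := by
    by_contra hcon
    push_neg at hcon
    have hne : (β tM : ℕ) ≠ (β sM : ℕ) := by
      intro h
      exact htMS (hβinj tM sM h ▸ hsM)
    have hcon' : (β tM : ℕ) < (β sM : ℕ) := by omega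
    have hmix : ∀ i : ℕ, (β tr : ℕ) ≤ i → i < (β tM : ℕ) → 2 ≤ cutCount H β i := by
      intro i h1 h2
      have hr1 : K.Reachable s0 sM := (hHsS s0 hs0S).trans (hHsS sM hsM).symm
      have hr2 : K.Reachable tr tM :=
        (hHsT tr (Finset.mem_compl.1 htr)).trans (hHsT tM htMS).symm
      obtain ⟨dS, hdS, hdSQ⟩ := exists_crosser β hKH (· ∈ S) hQS hr1 hs0S
        (show (β s0 : ℕ) ≤ i by omega) (show i < (β sM : ℕ) by omega)
      obtain ⟨dT, hdT, hdTQ⟩ := exists_crosser β hKH (· ∉ S) hQT hr2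
        (Finset.mem_compl.1 htr) h1 h2
      have hne2 : dS ≠ dT := fun he => hdTQ (he ▸ hdSQ)
      calc 2 = ({dS, dT} : Finset W).card := (Finset.card_pair hne2).symm
        _ ≤ (crossers H β i).card :=
            Finset.card_le_card (Finset.insert_subset hdS (Finset.singleton_subset_iff.2 hdT))
    have hone : ∀ i ∈ range (n' - 1), 1 ≤ cutCount H β i := by
      intro i hi
      rw [mem_range] at hi
      exact cutCount_pos hconn β (by omega)
    have htr_le : (β tr : ℕ) ≤ (β tM : ℕ) := htrmin tM htM
    have htM_lt : (β tM : ℕ) ≤ n' - 2 := by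
      have := (β sM).isLt
      omega
    have hb1 : ∑ i ∈ Finset.Ico 0 (β tr : ℕ), cutCount H β i ≥ (β tr : ℕ) := by
      have h := Finset.card_nsmul_le_sum (Finset.Ico 0 (β tr : ℕ)) (fun i => cutCount H β i) 1
        (fun i hi => hone i (by rw [Finset.mem_Ico] at hi; rw [mem_range]; omega))
      simpa [Nat.card_Ico] using h
    have hb2 : ∑ i ∈ Finset.Ico (β tr : ℕ) (β tM : ℕ), cutCount H β i
        ≥ 2 * ((β tM : ℕ) - (β tr : ℕ)) := by
      have h := Finset.card_nsmul_le_sum (Finset.Ico (β tr : ℕ) (β tM : ℕ)) (fun i => cutCount H β i) 2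
        (fun i hi => by rw [Finset.mem_Ico] at hi; exact hmix i hi.1 hi.2)
      simp only [Nat.card_Ico, smul_eq_mul] at h
      omega
    have hb3 : ∑ i ∈ Finset.Ico (β tM : ℕ) (n' - 1), cutCount H β i
        ≥ (n' - 1) - (β tM : ℕ) := by
      have h := Finset.card_nsmul_le_sum (Finset.Ico (β tM : ℕ) (n' - 1)) (fun i => cutCount H β i) 1
        (fun i hi => hone i (by rw [Finset.mem_Ico] at hi; rw [mem_range]; omega))
      simp only [Nat.card_Ico, smul_eq_mul] at h
      omega
    have hsumsplit : ∑ i ∈ range (n' - 1), cutCount H β i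
        = ∑ i ∈ Finset.Ico 0 (β tr : ℕ), cutCount H β i
          + ∑ i ∈ Finset.Ico (β tr : ℕ) (β tM : ℕ), cutCount H β i
          + ∑ i ∈ Finset.Ico (β tM : ℕ) (n' - 1), cutCount H β i := by
      rw [Finset.range_eq_Ico, ← Finset.sum_Ico_consecutive (cutCount H β)
        (Nat.zero_le (β tM : ℕ)) (by omega : (β tM : ℕ) ≤ n' - 1),
        ← Finset.sum_Ico_consecutive (cutCount H β) (Nat.zero_le (β tr : ℕ)) htr_le]
    have hObig : ordProfile H β ≥ ∑ i ∈ range (n' - 1), cutCount H β i := by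
      rw [ordProfile_eq_sum_cutCount]
      exact Finset.sum_le_sum_of_subset (by
        intro t ht
        rw [mem_range] at ht ⊢
        omega)
    have hkbound : (β tM : ℕ) - (β tr : ℕ) ≤ k := by omega
    -- T is squeezed in an interval of length ≤ k+1
    have hTimage : Sᶜ.image (fun z => (β z : ℕ)) ⊆ Finset.Icc (β tr : ℕ) (β tM : ℕ) := by
      intro t ht
      rw [Finset.mem_image] at ht
      obtain ⟨z, hz, rfl⟩ := ht
      rw [Finset.mem_Icc]
      exact ⟨htrmin z hz, htMmax z hz⟩
    have hTcard' : Sᶜ.card ≤ (β tM : ℕ) - (β tr : ℕ) + 1 := by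
      have h1 : (Sᶜ.image (fun z => (β z : ℕ))).card = Sᶜ.card :=
        Finset.card_image_of_injOn (fun a _ b _ h => hβinj a b h)
      have h2 := Finset.card_le_card hTimage
      rw [h1, Nat.card_Icc] at h2
      omega
    omega
  -- per-cut comparison
  have percut : ∀ i : Fin n',
      cutCount H γ (i : ℕ) ≤ cutCount H β ((β (γ.symm i)) : ℕ) := by
    intro i
    set e := γ.symm i with hedef
    set q := (β e : ℕ) with hq
    have hei : (γ e : ℕ) = (i : ℕ) := by rw [hedef]; simp
    by_cases heS : e ∈ S
    · -- left part is inside S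
      have him : (i : ℕ) < m := by rw [← hei]; exact (hsplit e).2 heS
      have hSmap : ∀ z ∈ crossers H γ (i : ℕ), z ∈ S → z ∈ crossers H β q := by
        intro z hz hzS
        rw [mem_crossers] at hz ⊢
        obtain ⟨hz1, hz2⟩ := hz
        obtain ⟨w, hw, hwle⟩ := (nbhdMin_le_iff _ _).1 hz1
        have hwS : w ∈ S := (hsplit w).1 (by omega)
        constructor
        · refine (nbhdMin_le_iff _ _).2 ⟨w, hw, ?_⟩
          have h1 : rS w ≤ rS e := by
            rw [← hγS w hwS, ← hγS e heS, hei]; exact hwle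
          exact hmonoS' w hwS e heS h1
        · have h1 : rS e < rS z := by
            rw [← hγS z hzS, ← hγS e heS, hei]; exact hz2
          exact hmonoS'' e heS z hzS h1
      have hTz : ∀ z ∈ crossers H γ (i : ℕ), z ∉ S → z = ys ∧ (β xs : ℕ) ≤ q := by
        intro z hz hzT
        rw [mem_crossers] at hz
        obtain ⟨hz1, hz2⟩ := hz
        obtain ⟨w, hw, hwle⟩ := (nbhdMin_le_iff _ _).1 hz1
        have hwS : w ∈ S := (hsplit w).1 (by omega)
        rcases hw with rfl | hadj
        · exact absurd hwS hzT
        · obtain ⟨hw1, hw2⟩ := hclass w z hadj hwS hzT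
          refine ⟨hw2, ?_⟩
          rw [← hw1]
          have h1 : rS w ≤ rS e := by
            rw [← hγS w hwS, ← hγS e heS, hei]; exact hwle
          exact hmonoS' w hwS e heS h1
      have hqsM : q ≤ (β sM : ℕ) := hsMmax e heS
      by_cases hyc : ys ∈ crossers H γ (i : ℕ) ∧ (β ys : ℕ) ≤ q
      · -- need replacement crosser
        obtain ⟨d, hd, hdQ⟩ := exists_crosser β hKH (· ∉ S) hQT
          ((hHsT ys hyT).trans (hHsT tM htMS).symm) hyT hyc.2 (by omega)
        apply Finset.card_le_card_of_injOn (fun z => if z = ys then d else z)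
        · intro z hz
          simp only [Finset.mem_coe] at hz ⊢
          by_cases hzy : z = ys
          · rw [if_pos hzy]; exact hd
          · rw [if_neg hzy]
            by_cases hzS : z ∈ S
            · exact hSmap z hz hzS
            · exact absurd ((hTz z hz hzS).1) hzy
        · intro a ha b hb hab
          simp only at hab
          by_cases ha' : a = ys <;> by_cases hb' : b = ys
          · rw [ha', hb']
          · rw [if_pos ha', if_neg hb'] at hab
            rw [Finset.mem_coe] at hb
            by_cases hbS : b ∈ S
            · exact absurd (hab ▸ hbS) hdQ
            · exact absurd ((hTz b hb hbS).1) hb'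
          · rw [if_neg ha', if_pos hb'] at hab
            rw [Finset.mem_coe] at ha
            by_cases haS : a ∈ S
            · exact absurd (hab.symm ▸ haS) hdQ
            · exact absurd ((hTz a ha haS).1) ha'
          · rw [if_neg ha', if_neg hb'] at hab
            exact hab
      · -- identity works
        apply Finset.card_le_card_of_injOn id
        · intro z hz
          simp only [Finset.mem_coe] at hz ⊢
          rw [id_eq]
          by_cases hzS : z ∈ S
          · exact hSmap z hz hzS
          · obtain ⟨hzy, hxsle⟩ := hTz z hz hzS
            rw [mem_crossers]
            have hys_not : ¬ ((β z : ℕ) ≤ q) := fun hle => hyc ⟨hzy ▸ hz, hzy ▸ hle⟩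
            refine ⟨(nbhdMin_le_iff _ _).2 ⟨xs, Or.inr (by rw [hzy]; exact hadjxy), hxsle⟩,
              by omega⟩
        · exact Set.injOn_id _
    · -- left part contains all of S
      have heT : e ∈ Sᶜ := Finset.mem_compl.2 heS
      have him : m ≤ (i : ℕ) := by
        rw [← hei, hγT e heS]; omega
      have hiT : (i : ℕ) = m + rT e := by rw [← hei, hγT e heS]
      have hallT : ∀ z ∈ crossers H γ (i : ℕ), z ∉ S ∧ q < (β z : ℕ) := by
        intro z hz
        rw [mem_crossers] at hz
        obtain ⟨hz1, hz2⟩ := hz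
        have hzT : z ∉ S := by
          intro hzS
          have := (hsplit z).2 hzS
          omega
        refine ⟨hzT, ?_⟩
        have h1 : rT e < rT z := by
          have := hγT z hzT
          omega
        exact hmonoT'' e heT z (Finset.mem_compl.2 hzT) h1
      have hwitT : ∀ z ∈ crossers H γ (i : ℕ),
          (∃ w, (w = z ∨ H.Adj w z) ∧ (β w : ℕ) ≤ q) ∨ z = ys := by
        intro z hz
        have hz' := hz
        rw [mem_crossers] at hz'
        obtain ⟨hz1, hz2⟩ := hz'
        obtain ⟨w, hw, hwle⟩ := (nbhdMin_le_iff _ _).1 hz1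
        by_cases hwS : w ∈ S
        · rcases hw with hwz | hadj
          · rw [hwz] at hwS
            exact absurd hwS (hallT z hz).1
          · exact Or.inr (hclass w z hadj hwS (hallT z hz).1).2
        · left
          refine ⟨w, hw, ?_⟩
          have h1 : rT w ≤ rT e := by
            have := hγT w hwS
            omega
          exact hmonoT' w (Finset.mem_compl.2 hwS) e heT h1
      by_cases hxq : (β xs : ℕ) ≤ q
      · apply Finset.card_le_card_of_injOn id
        · intro z hz
          simp only [Finset.mem_coe] at hz ⊢
          rw [id_eq, mem_crossers]
          refine ⟨?_, (hallT z hz).2⟩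
          rcases hwitT z hz with ⟨w, hw, hwle⟩ | hzy
          · exact (nbhdMin_le_iff _ _).2 ⟨w, hw, hwle⟩
          · exact (nbhdMin_le_iff _ _).2 ⟨xs, Or.inr (by rw [hzy]; exact hadjxy), hxq⟩
        · exact Set.injOn_id _
      · push_neg at hxq
        obtain ⟨d, hd, hdQ⟩ := exists_crosser β hKH (· ∈ S) hQS
          (hHsS s0 hs0S) hs0S (by omega) hxq
        apply Finset.card_le_card_of_injOn (fun z => if z = ys then d else z)
        · intro z hz
          simp only [Finset.mem_coe] at hz ⊢
          by_cases hzy : z = ys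
          · rw [if_pos hzy]; exact hd
          · rw [if_neg hzy]
            rw [mem_crossers]
            refine ⟨?_, (hallT z hz).2⟩
            rcases hwitT z hz with ⟨w, hw, hwle⟩ | hzy'
            · exact (nbhdMin_le_iff _ _).2 ⟨w, hw, hwle⟩
            · exact absurd hzy' hzy
        · intro a ha b hb hab
          simp only at hab
          rw [Finset.mem_coe] at ha hb
          by_cases ha' : a = ys <;> by_cases hb' : b = ys
          · rw [ha', hb']
          · rw [if_pos ha', if_neg hb'] at hab
            exact absurd (hab ▸ hdQ) (hallT b hb).1
          · rw [if_neg ha', if_pos hb'] at hab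
            exact absurd (hab.symm ▸ hdQ) (hallT a ha).1
          · rw [if_neg ha', if_neg hb'] at hab
            exact hab
  -- assemble
  refine ⟨γ, ?_, hsplit⟩
  have e1 : ordProfile H γ = ∑ i : Fin n', cutCount H γ (i : ℕ) := by
    rw [ordProfile_eq_sum_cutCount, Fin.sum_univ_eq_sum_range]
  have e2 : ordProfile H β = ∑ i : Fin n', cutCount H β (i : ℕ) := by
    rw [ordProfile_eq_sum_cutCount, Fin.sum_univ_eq_sum_range]
  rw [e1, e2]
  calc ∑ i : Fin n', cutCount H γ (i : ℕ)
      ≤ ∑ i : Fin n', cutCount H β ((β (γ.symm i)) : ℕ) :=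
        Finset.sum_le_sum (fun i _ => percut i)
    _ = ∑ i : Fin n', cutCount H β (i : ℕ) :=
        Equiv.sum_comp (γ.symm.trans β) (fun j : Fin n' => cutCount H β (j : ℕ))
end Uncross


lemma insert_step {n n' : ℕ} [Fintype V] [DecidableEq V] {G : SimpleGraph V} {v x y : V}
    {xs ys : {w : V // w ≠ v}} {S : Finset {w : V // w ≠ v}}
    (hcard : Fintype.card {w : V // w ≠ v} = n') (hcardV : Fintype.card V = n)
    (hn : n = n' + 1)
    (hxS : xs ∈ S) (hyT : ys ∉ S)
    (hadj' : (Gp G v x y).Adj xs ys)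
    (hGclass : ∀ a b : {w : V // w ≠ v}, G.Adj ↑a ↑b → (a ∈ S ↔ b ∈ S))
    (hvdeg : ∀ w : V, G.Adj w v → w = ↑xs ∨ w = ↑ys)
    (γ : {w : V // w ≠ v} ≃ Fin n')
    (hsplit : ∀ z, ((γ z : ℕ) < S.card ↔ z ∈ S)) :
    ∃ α : V ≃ Fin n, ordProfile G α ≤ ordProfile (Gp G v x y) γ + 1 := by
  classical
  set m := S.card with hm
  have hmlen : m ≤ n' := by
    have h1 := Finset.card_le_univ S
    omega
  have hglt : ∀ z : {w : V // w ≠ v}, (γ z : ℕ) < n' := fun z => (γ z).isLt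
  set f : V → Fin n := fun z =>
    if h : z = v then ⟨m, by omega⟩
    else (if (γ ⟨z, h⟩ : ℕ) < m then ⟨(γ ⟨z, h⟩ : ℕ), by omega⟩
          else ⟨(γ ⟨z, h⟩ : ℕ) + 1, by have := hglt ⟨z, h⟩; omega⟩) with hf
  have hfv : (f v : ℕ) = m := by simp only [hf, dif_pos rfl]
  have hfz : ∀ (z : V) (hz : z ≠ v),
      (f z : ℕ) = if (γ ⟨z, hz⟩ : ℕ) < m then (γ ⟨z, hz⟩ : ℕ) else (γ ⟨z, hz⟩ : ℕ) + 1 := by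
    intro z hz
    simp only [hf, dif_neg hz]
    split_ifs <;> rfl
  have hinj : Function.Injective f := by
    intro a b hab
    have hv : (f a : ℕ) = (f b : ℕ) := congrArg Fin.val hab
    by_cases ha : a = v <;> by_cases hb : b = v
    · rw [ha, hb]
    · rw [ha, hfv, hfz b hb] at hv
      have h1 := hsplit ⟨b, hb⟩
      by_cases h2 : (⟨b, hb⟩ : {w : V // w ≠ v}) ∈ S <;> split_ifs at hv <;> omega
    · rw [hb, hfv, hfz a ha] at hv
      have h1 := hsplit ⟨a, ha⟩
      by_cases h2 : (⟨a, ha⟩ : {w : V // w ≠ v}) ∈ S <;> split_ifs at hv <;> omega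
    · rw [hfz a ha, hfz b hb] at hv
      have h3 : (γ ⟨a, ha⟩ : ℕ) = (γ ⟨b, hb⟩ : ℕ) := by split_ifs at hv <;> omega
      have h4 : (⟨a, ha⟩ : {w : V // w ≠ v}) = ⟨b, hb⟩ :=
        γ.injective (Fin.val_injective h3)
      exact congrArg Subtype.val h4
  set α : V ≃ Fin n := Equiv.ofBijective f
    ((Fintype.bijective_iff_injective_and_card f).2 ⟨hinj, by
      rw [Fintype.card_fin]; exact hcardV⟩) with hα
  have hαv : (α v : ℕ) = m := hfv
  have hαz : ∀ (z : V) (hz : z ≠ v),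
      (α z : ℕ) = if (γ ⟨z, hz⟩ : ℕ) < m then (γ ⟨z, hz⟩ : ℕ) else (γ ⟨z, hz⟩ : ℕ) + 1 := hfz
  have hsplit' : ∀ (z : V) (hz : z ≠ v), ((γ ⟨z, hz⟩ : ℕ) < m ↔ (⟨z, hz⟩ : {w : V // w ≠ v}) ∈ S) :=
    fun z hz => hsplit ⟨z, hz⟩
  have hαys : (α ↑ys : ℕ) = (γ ys : ℕ) + 1 := by
    have h1 : (α ↑ys : ℕ) = if (γ ⟨↑ys, ys.2⟩ : ℕ) < m then (γ ⟨(↑ys : V), ys.2⟩ : ℕ)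
        else (γ ⟨(↑ys : V), ys.2⟩ : ℕ) + 1 := hαz ↑ys ys.2
    rw [Subtype.coe_eta] at h1
    rw [h1, if_neg (fun hlt => hyT ((hsplit ys).1 hlt))]
  have hαxs : (α ↑xs : ℕ) = (γ xs : ℕ) := by
    have h1 : (α ↑xs : ℕ) = if (γ ⟨↑xs, xs.2⟩ : ℕ) < m then (γ ⟨(↑xs : V), xs.2⟩ : ℕ)
        else (γ ⟨(↑xs : V), xs.2⟩ : ℕ) + 1 := hαz ↑xs xs.2
    rw [Subtype.coe_eta] at h1
    rw [h1, if_pos ((hsplit xs).2 hxS)]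
  have hyhi : m ≤ (γ ys : ℕ) := by
    by_contra hcon
    exact hyT ((hsplit ys).1 (by omega))
  have hxlo : (γ xs : ℕ) < m := (hsplit xs).2 hxS
  refine ⟨α, ?_⟩
  have keyLow : ∀ i : ℕ, i < m → cutCount G α i ≤ cutCount (Gp G v x y) γ i := by
    intro i him
    have hysnot : (↑ys : V) ∉ crossers G α i := by
      rw [mem_crossers]
      rintro ⟨h1, h2⟩
      obtain ⟨w, hw, hwle⟩ := (nbhdMin_le_iff _ _).1 h1
      rcases hw with hwys | hadj
      · rw [hwys] at hwle
        omega
      · by_cases hwv : w = v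
        · rw [hwv, hαv] at hwle
          omega
        · have hweq := hαz w hwv
          have hiff := hGclass ⟨w, hwv⟩ ys hadj
          have hwS : (⟨w, hwv⟩ : {w : V // w ≠ v}) ∉ S := fun hc => hyT (hiff.1 hc)
          have hwm : ¬ ((γ ⟨w, hwv⟩ : ℕ) < m) := fun hc => hwS ((hsplit' w hwv).1 hc)
          rw [if_neg hwm] at hweq
          omega
    apply Finset.card_le_card_of_injOn (fun z : V => if h : z = v then ys else ⟨z, h⟩)
    · intro z hz
      simp only [Finset.mem_coe] at hz ⊢
      have hz' := hz
      rw [mem_crossers] at hz'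
      obtain ⟨h1, h2⟩ := hz'
      by_cases hzv : z = v
      · rw [dif_pos hzv, mem_crossers]
        subst hzv
        rw [hαv] at h2
        obtain ⟨w, hw, hwle⟩ := (nbhdMin_le_iff _ _).1 h1
        rcases hw with hwv | hadj
        · rw [hwv, hαv] at hwle
          omega
        · rcases hvdeg w hadj with hwx | hwy
          · rw [hwx, hαxs] at hwle
            exact ⟨(nbhdMin_le_iff _ _).2 ⟨xs, Or.inr hadj', hwle⟩, by omega⟩
          · rw [hwy, hαys] at hwle
            omega
      · rw [dif_neg hzv, mem_crossers]
        have hzeq := hαz z hzv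
        have hpos : i < (γ ⟨z, hzv⟩ : ℕ) := by
          split_ifs at hzeq <;> omega
        refine ⟨?_, hpos⟩
        obtain ⟨w, hw, hwle⟩ := (nbhdMin_le_iff _ _).1 h1
        rcases hw with hwz | hadj
        · rw [hwz] at hwle
          omega
        · have hwv : w ≠ v := by
            intro hwv
            rw [hwv, hαv] at hwle
            omega
          refine (nbhdMin_le_iff _ _).2 ⟨⟨w, hwv⟩, Or.inr (Gadj_to_Gp hadj), ?_⟩
          have hweq := hαz w hwv
          split_ifs at hweq <;> omega
    · intro a ha b hb hab
      rw [Finset.mem_coe] at ha hb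
      simp only at hab
      by_cases ha' : a = v <;> by_cases hb' : b = v
      · rw [ha', hb']
      · exfalso
        rw [dif_pos ha', dif_neg hb'] at hab
        have hbys : b = ↑ys := by
          have := congrArg Subtype.val hab
          exact this.symm
        rw [hbys] at hb
        exact hysnot hb
      · exfalso
        rw [dif_neg ha', dif_pos hb'] at hab
        have hays : a = ↑ys := congrArg Subtype.val hab
        rw [hays] at ha
        exact hysnot ha
      · rw [dif_neg ha', dif_neg hb'] at hab
        exact congrArg Subtype.val hab
  have keyMid : cutCount G α m ≤ 1 := by
    have hsub : crossers G α m ⊆ {(↑ys : V)} := by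
      intro z hz
      rw [mem_crossers] at hz
      obtain ⟨h1, h2⟩ := hz
      have hzv : z ≠ v := by
        intro h
        rw [h, hαv] at h2
        omega
      have hzeq := hαz z hzv
      have hzhi : m ≤ (γ ⟨z, hzv⟩ : ℕ) := by
        split_ifs at hzeq <;> omega
      have hzT : (⟨z, hzv⟩ : {w : V // w ≠ v}) ∉ S := fun hc => by
        have := (hsplit' z hzv).2 hc
        omega
      obtain ⟨w, hw, hwle⟩ := (nbhdMin_le_iff _ _).1 h1
      rcases hw with hwz | hadj
      · rw [hwz] at hwle
        omega
      · by_cases hwv : w = v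
        · rcases hvdeg z (by rw [hwv] at hadj; exact hadj.symm) with hzx | hzy
          · exact absurd (by
              have : (⟨z, hzv⟩ : {w : V // w ≠ v}) = xs := Subtype.ext hzx
              rw [this]
              exact hxS) hzT
          · rw [Finset.mem_singleton, hzy]
        · exfalso
          have hweq := hαz w hwv
          have hwS : (⟨w, hwv⟩ : {w : V // w ≠ v}) ∈ S := by
            by_cases hc : (⟨w, hwv⟩ : {w : V // w ≠ v}) ∈ S
            · exact hc
            · have hwm : ¬ ((γ ⟨w, hwv⟩ : ℕ) < m) := fun hcc => hc ((hsplit' w hwv).1 hcc)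
              rw [if_neg hwm] at hweq
              omega
          exact hzT ((hGclass ⟨w, hwv⟩ ⟨z, hzv⟩ hadj).1 hwS)
    calc cutCount G α m ≤ ({(↑ys : V)} : Finset V).card := Finset.card_le_card hsub
      _ = 1 := Finset.card_singleton _
  have keyHigh : ∀ i : ℕ, m < i → cutCount G α i ≤ cutCount (Gp G v x y) γ (i - 1) := by
    intro i him
    have hnotv : ∀ z ∈ crossers G α i, z ≠ v := by
      intro z hz h
      rw [mem_crossers] at hz
      rw [h, hαv] at hz
      omega
    apply Finset.card_le_card_of_injOn
      (fun z : V => if h : z = v then ys else ⟨z, h⟩)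
    · intro z hz
      simp only [Finset.mem_coe] at hz ⊢
      have hzv : z ≠ v := hnotv z hz
      rw [dif_neg hzv, mem_crossers]
      rw [mem_crossers] at hz
      obtain ⟨h1, h2⟩ := hz
      have hzeq := hαz z hzv
      have hzhi : m ≤ (γ ⟨z, hzv⟩ : ℕ) := by
        split_ifs at hzeq <;> omega
      have hpos : i - 1 < (γ ⟨z, hzv⟩ : ℕ) := by
        rw [if_neg (by omega)] at hzeq
        omega
      refine ⟨?_, hpos⟩
      obtain ⟨w, hw, hwle⟩ := (nbhdMin_le_iff _ _).1 h1
      rcases hw with hwz | hadj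
      · rw [hwz] at hwle
        omega
      · by_cases hwv : w = v
        · rcases hvdeg z (by rw [hwv] at hadj; exact hadj.symm) with hzx | hzy
          · exfalso
            have hze : (⟨z, hzv⟩ : {w : V // w ≠ v}) = xs := Subtype.ext hzx
            rw [hze] at hzhi
            omega
          · have hze : (⟨z, hzv⟩ : {w : V // w ≠ v}) = ys := Subtype.ext hzy
            rw [hze]
            exact (nbhdMin_le_iff _ _).2 ⟨xs, Or.inr hadj', by omega⟩
        · refine (nbhdMin_le_iff _ _).2 ⟨⟨w, hwv⟩, Or.inr (Gadj_to_Gp hadj), ?_⟩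
          have hweq := hαz w hwv
          split_ifs at hweq <;> omega
    · intro a ha b hb hab
      rw [Finset.mem_coe] at ha hb
      simp only at hab
      rw [dif_neg (hnotv a ha), dif_neg (hnotv b hb)] at hab
      exact congrArg Subtype.val hab
  -- sum assembly
  have hs1 : ordProfile G α = ∑ i ∈ Finset.Ico 0 m, cutCount G α i
      + cutCount G α m + ∑ i ∈ Finset.Ico (m + 1) n, cutCount G α i := by
    rw [ordProfile_eq_sum_cutCount, Finset.range_eq_Ico,
      ← Finset.sum_Ico_consecutive (fun i => cutCount G α i) (Nat.zero_le (m + 1)) (by omega),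
      ← Finset.sum_Ico_consecutive (fun i => cutCount G α i) (Nat.zero_le m) (by omega)]
    have h5 : ∑ i ∈ Finset.Ico m (m + 1), cutCount G α i = cutCount G α m := by
      rw [Finset.sum_Ico_eq_sum_range]
      simp
    omega
  have hs2 : ∑ i ∈ Finset.Ico (m + 1) n, cutCount G α i
      ≤ ∑ j ∈ Finset.Ico m n', cutCount (Gp G v x y) γ j := by
    calc ∑ i ∈ Finset.Ico (m + 1) n, cutCount G α i
        ≤ ∑ i ∈ Finset.Ico (m + 1) n, cutCount (Gp G v x y) γ (i - 1) :=
          Finset.sum_le_sum (fun i hi => keyHigh i (by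
            rw [Finset.mem_Ico] at hi
            omega))
      _ = ∑ j ∈ Finset.Ico m n', cutCount (Gp G v x y) γ j := by
          rw [Finset.sum_Ico_eq_sum_range, Finset.sum_Ico_eq_sum_range]
          have he : n - (m + 1) = n' - m := by omega
          rw [he]
          refine Finset.sum_congr rfl (fun j _ => ?_)
          congr 1
          omega
  have hs3 : ∑ i ∈ Finset.Ico 0 m, cutCount G α i
      ≤ ∑ i ∈ Finset.Ico 0 m, cutCount (Gp G v x y) γ i :=
    Finset.sum_le_sum (fun i hi => keyLow i (by rw [Finset.mem_Ico] at hi; omega))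
  have hs4 : ordProfile (Gp G v x y) γ = ∑ i ∈ Finset.Ico 0 m, cutCount (Gp G v x y) γ i
      + ∑ j ∈ Finset.Ico m n', cutCount (Gp G v x y) γ j := by
    rw [ordProfile_eq_sum_cutCount, Finset.range_eq_Ico,
      ← Finset.sum_Ico_consecutive (fun i => cutCount (Gp G v x y) γ i) (Nat.zero_le m) hmlen]
  omega


lemma profile_le {G : SimpleGraph V} [Fintype V] (α : V ≃ Fin (Fintype.card V)) :
    profile G ≤ ordProfile G α :=
  Nat.sInf_le ⟨α, rfl⟩

lemma exists_profile_eq (G : SimpleGraph V) [Fintype V] :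
    ∃ α : V ≃ Fin (Fintype.card V), ordProfile G α = profile G :=
  Nat.sInf_mem (⟨ordProfile G (Fintype.equivFin V), ⟨Fintype.equivFin V, rfl⟩⟩ :
    {p : ℕ | ∃ α : V ≃ Fin (Fintype.card V), ordProfile G α = p}.Nonempty)

/-- Suppressing a degree-2 vertex `v` whose two incident edges are bridges of order at
least `k + 2` decreases the profile by exactly one:
`prf(G) - n = prf(G') - (n - 1)`, i.e. `prf(G) = prf(G') + 1`. -/
theorem profile_suppress_degree_two_vertex [Fintype V] [DecidableEq V]
    (G : SimpleGraph V) (hG : G.Connected) (k : ℕ) (hk : 1 ≤ k)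
    (hprf : profile G ≤ Fintype.card V - 1 + k)
    (v x y : V) (hxy : x ≠ y) (hxv : G.Adj x v) (hyv : G.Adj y v)
    (hdeg : G.neighborSet v = {x, y})
    (hbx : G.IsBridge s(x, v)) (hby : G.IsBridge s(y, v))
    (hox : k + 2 ≤ bridgeOrd G x v) (hoy : k + 2 ≤ bridgeOrd G y v) :
    profile G =
      profile (SimpleGraph.fromRel
        (fun a b : {w : V // w ≠ v} => G.Adj ↑a ↑b ∨ ((a : V) = x ∧ (b : V) = y))) + 1 := by
  classical
  show profile G = profile (Gp G v x y) + 1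
  have hxvne : x ≠ v := hxv.ne
  have hyvne : y ≠ v := hyv.ne
  set xs : {w : V // w ≠ v} := ⟨x, hxvne⟩ with hxsdef
  set ys : {w : V // w ≠ v} := ⟨y, hyvne⟩ with hysdef
  set n' := Fintype.card {w : V // w ≠ v} with hn'def
  have hn : Fintype.card V = n' + 1 := card_succ v
  have hn'pos : 0 < n' := by
    rw [hn'def]
    exact Fintype.card_pos_iff.2 ⟨xs⟩
  set A := sideA G v x y with hAdef
  set B := sideA G v y x with hBdef
  have hdeg' : G.neighborSet v = {y, x} := by rw [hdeg]; exact Set.pair_comm _ _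
  -- basic side facts
  have hmemA : ∀ w : V, w ∈ A ↔ (H2 G v x y).Reachable w x := fun w => mem_sideA
  have hmemB : ∀ w : V, w ∈ B ↔ (H2 G v x y).Reachable w y := by
    intro w
    rw [hBdef, mem_sideA, show H2 G v y x = H2 G v x y from H2_symm.symm]
  have hH2ne : ∀ {a b : V}, G.Adj a b → a ≠ v → b ≠ v → (H2 G v x y).Adj a b := by
    intro a b hab ha hb
    refine H2_adj.2 ⟨hab, ?_, ?_⟩
    · intro h
      rcases Sym2.eq_iff.1 h with ⟨h1, h2⟩ | ⟨h1, h2⟩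
      · exact hb h2
      · exact ha h1
    · intro h
      rcases Sym2.eq_iff.1 h with ⟨h1, h2⟩ | ⟨h1, h2⟩
      · exact hb h2
      · exact ha h1
  have hxA : x ∈ A := (hmemA x).2 (SimpleGraph.Reachable.refl _)
  have hyB : y ∈ B := (hmemB y).2 (SimpleGraph.Reachable.refl _)
  have hyA : y ∉ A := by
    rw [hmemA]
    intro h
    exact not_reach_xy hxy hyv hbx h.symm
  have hxB : x ∉ B := by
    rw [hmemB]
    intro h
    exact not_reach_xy hxy hyv hbx h
  have hACompl : ∀ w : V, w ≠ v → (w ∉ A ↔ w ∈ B) := by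
    intro w hw
    constructor
    · intro hwA
      rcases trichotomy hG hdeg w with h | h | h
      · exact absurd h hw
      · exact absurd ((hmemA w).2 h) hwA
      · exact (hmemB w).2 h
    · intro hwB hwA
      exact not_reach_xy hxy hyv hbx (((hmemA w).1 hwA).symm.trans ((hmemB w).1 hwB))
  -- sizes
  have hvA : v ∉ A := v_not_mem_sideA hdeg hxv
  have hvB : v ∉ B := v_not_mem_sideA hdeg' hyv
  have hAcard : k + 2 ≤ A.card := by
    have h := bridgeOrd_eq hG hxy hxv hyv hdeg hbx
    rw [h] at hox
    exact le_trans hox (min_le_left _ _)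
  have hBcard : k + 2 ≤ B.card := by
    have h := bridgeOrd_eq hG hxy.symm hyv hxv hdeg' hby
    rw [h] at hoy
    exact le_trans hoy (min_le_left _ _)
  -- the S side as a finset of the subtype
  set S : Finset {w : V // w ≠ v} := univ.filter (fun z => ↑z ∈ A) with hSdef
  have hmemS : ∀ z : {w : V // w ≠ v}, z ∈ S ↔ ↑z ∈ A := by
    intro z
    rw [hSdef, Finset.mem_filter]
    simp
  have hmemSc : ∀ z : {w : V // w ≠ v}, z ∈ Sᶜ ↔ ↑z ∈ B := by
    intro z
    rw [Finset.mem_compl, hmemS]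
    exact hACompl ↑z z.2
  have hmap : ∀ (C : Finset V), v ∉ C →
      ((univ.filter (fun z : {w : V // w ≠ v} => ↑z ∈ C)).map
        ⟨Subtype.val, Subtype.val_injective⟩ = C) := by
    intro C hvC
    ext w
    simp only [Finset.mem_map, Finset.mem_filter, Finset.mem_univ, true_and,
      Function.Embedding.coeFn_mk]
    constructor
    · rintro ⟨z, hz, rfl⟩
      exact hz
    · intro hw
      exact ⟨⟨w, fun h => hvC (h ▸ hw)⟩, hw, rfl⟩
  have hScard : S.card = A.card := by
    rw [← hmap A hvA, ← hSdef]
    exact (Finset.card_map _).symm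
  have hSccard : Sᶜ.card = B.card := by
    have h1 : Sᶜ = univ.filter (fun z : {w : V // w ≠ v} => ↑z ∈ B) := by
      ext z
      rw [hmemSc z, Finset.mem_filter]
      simp
    rw [← hmap B hvB, ← h1]
    exact (Finset.card_map _).symm
  -- membership of xs, ys
  have hxS : xs ∈ S := (hmemS xs).2 hxA
  have hyT : ys ∉ S := fun h => hyA ((hmemS ys).1 h)
  have hySc : ys ∈ Sᶜ := Finset.mem_compl.2 hyT
  have hxTc : xs ∉ Sᶜ := fun h => hxB ((hmemSc xs).1 h)
  -- adjacency and classification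
  have hadj' : (Gp G v x y).Adj xs ys :=
    Gp_adj.2 ⟨fun h => hxy (congrArg Subtype.val h), Or.inr (Or.inl ⟨rfl, rfl⟩)⟩
  have hGclassS : ∀ a b : {w : V // w ≠ v}, G.Adj ↑a ↑b → (a ∈ S ↔ b ∈ S) := by
    intro a b hab
    have h2 := hH2ne hab a.2 b.2
    rw [hmemS, hmemS, hmemA, hmemA]
    exact ⟨fun h => h2.symm.reachable.trans h, fun h => h2.reachable.trans h⟩
  have hvdeg : ∀ w : V, G.Adj w v → w = ↑xs ∨ w = ↑ys := by
    intro w hw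
    have : w ∈ G.neighborSet v := (G.mem_neighborSet v w).2 hw.symm
    rw [hdeg] at this
    simpa using this
  have hclassA : ∀ a b : {w : V // w ≠ v},
      (Gp G v x y).Adj a b → a ∈ S → b ∉ S → a = xs ∧ b = ys := by
    intro a b hab haS hbT
    rcases (Gp_adj.1 hab).2 with h | h | h
    · exact absurd ((hGclassS a b h).1 haS) hbT
    · exact ⟨Subtype.ext h.1, Subtype.ext h.2⟩
    · exfalso
      apply hyA
      rw [← h.2]
      exact (hmemS a).1 haS
  have hclassB : ∀ a b : {w : V // w ≠ v},
      (Gp G v x y).Adj a b → a ∈ Sᶜ → b ∉ Sᶜ → a = ys ∧ b = xs := by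
    intro a b hab haS hbT
    rcases (Gp_adj.1 hab).2 with h | h | h
    · exfalso
      have := (hGclassS a b h).2 (Finset.notMem_compl.1 hbT)
      exact (Finset.mem_compl.1 haS) this
    · exfalso
      apply hxB
      rw [← h.1]
      exact (hmemSc a).1 haS
    · exact ⟨Subtype.ext h.2, Subtype.ext h.1⟩
  -- Hs facts
  set Hs := (Gp G v x y).deleteEdges {s(xs, ys)} with hHsdef
  have hHsH2 : ∀ a b : {w : V // w ≠ v}, Hs.Adj a b → (H2 G v x y).Adj ↑a ↑b := by
    intro a b hab
    obtain ⟨h1, h2⟩ := SimpleGraph.deleteEdges_adj.1 hab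
    rcases (Gp_adj.1 h1).2 with h | h | h
    · exact hH2ne h a.2 b.2
    · exact absurd (by
        rw [Set.mem_singleton_iff, Sym2.eq_iff]
        exact Or.inl ⟨Subtype.ext h.1, Subtype.ext h.2⟩) h2
    · exact absurd (by
        rw [Set.mem_singleton_iff, Sym2.eq_iff]
        exact Or.inr ⟨Subtype.ext h.2, Subtype.ext h.1⟩) h2
  have hHsSide : ∀ a b : {w : V // w ≠ v}, Hs.Adj a b → (a ∈ S ↔ b ∈ S) :=
    fun a b hab => hGclassS a b (H2_adj.1 (hHsH2 a b hab)).1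
  have hlift : ∀ {a b : V} (p : (H2 G v x y).Walk a b) (ha : a ≠ v) (hb : b ≠ v),
      Hs.Reachable ⟨a, ha⟩ ⟨b, hb⟩ := by
    intro a b p
    induction p with
    | nil =>
      intro ha hb
      exact SimpleGraph.Reachable.refl _
    | @cons a c b h q ih =>
      intro ha hb
      have hcv : c ≠ v := by
        intro hc
        rw [hc] at h
        exact not_H2_adj_v hdeg a h
      have hadjs : Hs.Adj ⟨a, ha⟩ ⟨c, hcv⟩ := by
        refine SimpleGraph.deleteEdges_adj.2 ⟨Gadj_to_Gp (H2_adj.1 h).1, ?_⟩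
        intro hmem
        rw [Set.mem_singleton_iff, Sym2.eq_iff] at hmem
        rcases hmem with ⟨h1, h2⟩ | ⟨h1, h2⟩
        · apply not_reach_xy hxy hyv hbx
          have ha' : a = x := congrArg Subtype.val h1
          have hc' : c = y := congrArg Subtype.val h2
          rw [ha', hc'] at h
          exact h.reachable
        · apply not_reach_xy hxy hyv hbx
          have ha' : a = y := congrArg Subtype.val h1
          have hc' : c = x := congrArg Subtype.val h2
          rw [ha', hc'] at h
          exact h.symm.reachable
      exact hadjs.reachable.trans (ih hcv hb)
  have hliftR : ∀ {a b : V} (ha : a ≠ v) (hb : b ≠ v), (H2 G v x y).Reachable a b →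
      Hs.Reachable ⟨a, ha⟩ ⟨b, hb⟩ := by
    intro a b ha hb hr
    obtain ⟨p⟩ := hr
    exact hlift p ha hb
  have hHsS : ∀ a ∈ S, Hs.Reachable a xs := by
    intro a haS
    have hr := (hmemA ↑a).1 ((hmemS a).1 haS)
    have := hliftR a.2 hxvne hr
    rwa [Subtype.coe_eta] at this
  have hHsT : ∀ a, a ∉ S → Hs.Reachable a ys := by
    intro a haS
    have hr := (hmemB ↑a).1 ((hmemSc a).1 (Finset.mem_compl.2 haS))
    have := hliftR a.2 hyvne hr
    rwa [Subtype.coe_eta] at this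
  have hHsGp : Hs ≤ Gp G v x y := SimpleGraph.deleteEdges_le _
  have hG'conn : (Gp G v x y).Connected := by
    rw [SimpleGraph.connected_iff]
    refine ⟨?_, ⟨xs⟩⟩
    intro z1 z2
    have h1 : (Gp G v x y).Reachable z1 xs ∨ (Gp G v x y).Reachable z1 ys := by
      by_cases hz : z1 ∈ S
      · exact Or.inl ((hHsS z1 hz).mono hHsGp)
      · exact Or.inr ((hHsT z1 hz).mono hHsGp)
    have h2 : (Gp G v x y).Reachable z2 xs ∨ (Gp G v x y).Reachable z2 ys := by
      by_cases hz : z2 ∈ S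
      · exact Or.inl ((hHsS z2 hz).mono hHsGp)
      · exact Or.inr ((hHsT z2 hz).mono hHsGp)
    have hxyr : (Gp G v x y).Reachable xs ys := hadj'.reachable
    rcases h1 with h1 | h1 <;> rcases h2 with h2 | h2
    · exact h1.trans h2.symm
    · exact h1.trans (hxyr.trans h2.symm)
    · exact h1.trans (hxyr.symm.trans h2.symm)
    · exact h1.trans h2.symm
  -- direction 1 : profile G' + 1 ≤ profile G
  have dir1 : profile (Gp G v x y) + 1 ≤ profile G := by
    obtain ⟨α, hα⟩ := exists_profile_eq G
    obtain ⟨β, hβ⟩ := delete_step hG hxv hyv rfl hn α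
    have h1 := profile_le (G := Gp G v x y) β
    omega
  -- direction 2
  have dir2 : profile G ≤ profile (Gp G v x y) + 1 := by
    obtain ⟨β, hβ⟩ := exists_profile_eq (Gp G v x y)
    have hβbound : ordProfile (Gp G v x y) β ≤ n' - 1 + k := by
      have h1 : profile (Gp G v x y) + 1 ≤ Fintype.card V - 1 + k := le_trans dir1 hprf
      omega
    by_cases h0 : β.symm ⟨0, hn'pos⟩ ∈ S
    · obtain ⟨γ, hγle, hγsplit⟩ := uncross_step rfl hn'pos hxS hyT hadj' hclassA
        hHsS (fun b hb => hHsT b hb) hHsSide hG'conn (by omega : k + 2 ≤ Sᶜ.card)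
        β h0 hβbound
      obtain ⟨αG, hαG⟩ := insert_step rfl rfl hn hxS hyT hadj' hGclassS hvdeg γ hγsplit
      have h2 := profile_le (G := G) αG
      omega
    · have h0' : β.symm ⟨0, hn'pos⟩ ∈ Sᶜ := Finset.mem_compl.2 h0
      have hsetswap : ({s(ys, xs)} : Set (Sym2 {w : V // w ≠ v})) = {s(xs, ys)} := by
        rw [Sym2.eq_swap]
      have hGclassSc : ∀ a b : {w : V // w ≠ v}, G.Adj ↑a ↑b → (a ∈ Sᶜ ↔ b ∈ Sᶜ) := by
        intro a b hab
        rw [Finset.mem_compl, Finset.mem_compl]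
        exact not_congr (hGclassS a b hab)
      have hHsS' : ∀ a ∈ Sᶜ, ((Gp G v x y).deleteEdges {s(ys, xs)}).Reachable a ys := by
        intro a ha
        rw [hsetswap]
        exact hHsT a (Finset.mem_compl.1 ha)
      have hHsT' : ∀ b, b ∉ Sᶜ → ((Gp G v x y).deleteEdges {s(ys, xs)}).Reachable b xs := by
        intro b hb
        rw [hsetswap]
        exact hHsS b (Finset.notMem_compl.1 hb)
      have hHsSide' : ∀ a b : {w : V // w ≠ v},
          ((Gp G v x y).deleteEdges {s(ys, xs)}).Adj a b → (a ∈ Sᶜ ↔ b ∈ Sᶜ) := by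
        intro a b hab
        rw [hsetswap] at hab
        rw [Finset.mem_compl, Finset.mem_compl]
        exact not_congr (hHsSide a b hab)
      obtain ⟨γ, hγle, hγsplit⟩ := uncross_step (S := Sᶜ) rfl hn'pos hySc hxTc hadj'.symm
        hclassB hHsS' hHsT' hHsSide' hG'conn
        (by rw [compl_compl]; omega : k + 2 ≤ (Sᶜᶜ).card)
        β h0' hβbound
      have hvdeg' : ∀ w : V, G.Adj w v → w = ↑ys ∨ w = ↑xs := by
        intro w hw
        exact Or.symm (hvdeg w hw)
      obtain ⟨αG, hαG⟩ := insert_step rfl rfl hn hySc hxTc hadj'.symm hGclassSc hvdeg' γ hγsplit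
      have h2 := profile_le (G := G) αG
      omega
  omega
end

section
/- Let G=(V,E) be a connected finite simple graph of order n and let k be a positive integer. Suppose V is partitioned into vertex sets of subgraphs F_1, F_2, F_3, F_4 such that for each i ∈ {2,3,4} there is a bridge e_i of G of order at least k+2 joining F_1 to F_i, and these bridges are the only edges leaving F_2, F_3 and F_4. Then prf(G) ≥ n+k. -/
variable {V : Type*}

/-- Auxiliary: a set closed under adjacency absorbs walks. -/
lemma aux_walk_closed {H : SimpleGraph V} {S : Set V}
    (hS : ∀ ⦃x y⦄, x ∈ S → H.Adj x y → y ∈ S) :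
    ∀ {x y : V}, H.Walk x y → x ∈ S → y ∈ S := by
  intro x y w
  induction w with
  | nil => exact id
  | cons h p ih => exact fun hx => ih (hS hx h)

/-- Auxiliary: a walk from inside a down-set to outside crosses an edge. -/
lemma aux_crossing {H : SimpleGraph V} {P : V → Prop} :
    ∀ {x y : V}, H.Walk x y → P x → ¬ P y →
      ∃ a c, H.Adj a c ∧ H.Reachable x c ∧ P a ∧ ¬ P c := by
  intro x y w
  induction w with
  | nil => exact fun hp hnp => absurd hp hnp
  | @cons a c y h p ih =>
    intro hp hnp
    by_cases hc : P c
    · obtain ⟨a', c', hadj, hr, hpa, hpc⟩ := ih hc hnp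
      exact ⟨a', c', hadj, h.reachable.trans hr, hpa, hpc⟩
    · exact ⟨a, c, h, h.reachable, hp, hc⟩

/-- Auxiliary: after deleting an edge, everything reaches one of its endpoints. -/
lemma aux_bridge_reach {G : SimpleGraph V} {u v : V} :
    ∀ {x y : V}, G.Walk x y →
      ((G.deleteEdges {s(u, v)}).Reachable y u ∨ (G.deleteEdges {s(u, v)}).Reachable y v) →
      ((G.deleteEdges {s(u, v)}).Reachable x u ∨ (G.deleteEdges {s(u, v)}).Reachable x v) := by
  intro x y w
  induction w with
  | nil => exact id
  | @cons a c d h p ih =>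
    intro hd
    have hcv := ih hd
    by_cases he : s(a, c) = s(u, v)
    · rw [Sym2.eq_iff] at he
      rcases he with ⟨h1, -⟩ | ⟨h1, -⟩
      · subst h1; exact Or.inl (SimpleGraph.Reachable.refl _)
      · subst h1; exact Or.inr (SimpleGraph.Reachable.refl _)
    · have hac : (G.deleteEdges {s(u, v)}).Adj a c :=
        SimpleGraph.deleteEdges_adj.mpr ⟨h, by simp [he]⟩
      rcases hcv with h1 | h1
      · exact Or.inl (hac.reachable.trans h1)
      · exact Or.inr (hac.reachable.trans h1)

/-- If `V` is partitioned into `F 0, F 1, F 2, F 3` where for each `i ∈ {1,2,3}` a bridge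
of order at least `k + 2` joins `F 0` to `F i` and is the only edge leaving `F i`, then
`prf(G) ≥ n + k`. -/
theorem profile_three_heavy_bridges [Fintype V] (G : SimpleGraph V) (hG : G.Connected)
    (k : ℕ) (hk : 1 ≤ k) (F : Fin 4 → Set V)
    (hpart : ∀ v : V, ∃! i : Fin 4, v ∈ F i)
    (hbridges : ∀ i : Fin 4, i ≠ 0 → ∃ u v : V, u ∈ F 0 ∧ v ∈ F i ∧ G.Adj u v ∧
      G.IsBridge s(u, v) ∧ k + 2 ≤ bridgeOrd G u v ∧
      ∀ u' v' : V, u' ∉ F i → v' ∈ F i → G.Adj u' v' → u' = u ∧ v' = v) :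
    Fintype.card V + k ≤ profile G := by
  classical
  have hne : Nonempty V := hG.nonempty
  set n := Fintype.card V with hn
  have hn1 : 1 ≤ n := Fintype.card_pos
  refine le_csInf ⟨ordProfile G (Fintype.equivFin V), Fintype.equivFin V, rfl⟩ ?_
  rintro p ⟨α, rfl⟩
  have hpos_lt : ∀ z : V, (α z : ℕ) ≤ n - 1 := fun z => Nat.le_pred_of_lt (α z).isLt
  -- choose the part b not containing the extremal vertices
  set x0 : V := α.symm ⟨0, by omega⟩ with hx0
  set x1 : V := α.symm ⟨n - 1, by omega⟩ with hx1
  obtain ⟨i0, hi0m, hi0u⟩ := hpart x0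
  obtain ⟨i1, hi1m, hi1u⟩ := hpart x1
  have hchoice : ∀ j0 j1 : Fin 4, ∃ b : Fin 4, b ≠ 0 ∧ b ≠ j0 ∧ b ≠ j1 := by decide
  obtain ⟨b, hb0, hbi0, hbi1⟩ := hchoice i0 i1
  have hx0nb : x0 ∉ F b := fun h => hbi0 (hi0u b h)
  have hx1nb : x1 ∉ F b := fun h => hbi1 (hi1u b h)
  obtain ⟨u, v, hu0, hvb, huv, hbr, hord, honly⟩ := hbridges b hb0
  set H := G.deleteEdges {s(u, v)} with hH
  have hunb : u ∉ F b := by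
    intro h
    obtain ⟨j, _, hju⟩ := hpart u
    exact hb0 ((hju b h).trans (hju 0 hu0).symm)
  -- closure of F b under H-adjacency, in both directions
  have hclosed : ∀ ⦃x y : V⦄, x ∈ F b → H.Adj x y → y ∈ F b := by
    intro x y hx hxy
    by_contra hy
    obtain ⟨rfl, rfl⟩ := honly y x hy hx (SimpleGraph.deleteEdges_adj.mp hxy).1.symm
    exact (SimpleGraph.deleteEdges_adj.mp hxy).2 (by rw [Sym2.eq_swap]; exact rfl)
  have hclosed' : ∀ ⦃x y : V⦄, x ∈ (F b)ᶜ → H.Adj x y → y ∈ (F b)ᶜ := by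
    intro x y hx hxy hy
    obtain ⟨rfl, rfl⟩ := honly x y hx hy (SimpleGraph.deleteEdges_adj.mp hxy).1
    exact (SimpleGraph.deleteEdges_adj.mp hxy).2 rfl
  -- reachability facts in H
  have hreach : ∀ z : V, H.Reachable z u ∨ H.Reachable z v := by
    intro z
    obtain ⟨w⟩ := hG.preconnected z u
    exact aux_bridge_reach w (Or.inl (SimpleGraph.Reachable.refl _))
  have hreachv : ∀ z ∈ F b, H.Reachable z v := by
    intro z hz
    rcases hreach z with h | h
    · exact absurd (h.elim fun w => aux_walk_closed hclosed w hz) hunb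
    · exact h
  have hreachu : ∀ z ∉ F b, H.Reachable z u := by
    intro z hz
    rcases hreach z with h | h
    · exact h
    · have hz' : z ∈ (F b)ᶜ := hz
      have hv' : v ∈ (F b)ᶜ := h.elim fun w => aux_walk_closed hclosed' w hz'
      exact absurd hvb hv'
  -- F b is the support of the component of v
  have hsupp : F b = (H.connectedComponentMk v).supp := by
    ext z
    rw [SimpleGraph.ConnectedComponent.mem_supp_iff, SimpleGraph.ConnectedComponent.eq]
    constructor
    · exact hreachv z
    · intro h
      by_contra hz
      have hz' : z ∈ (F b)ᶜ := hz
      exact (h.elim fun w => aux_walk_closed hclosed' w hz') hvb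
  have hcardFb : k + 2 ≤ (F b).ncard := by
    rw [hsupp]
    exact hord.trans (min_le_right _ _)
  -- positions of F b
  set T : Finset ℕ := (Finset.univ.filter (· ∈ F b)).image (fun z => (α z : ℕ)) with hT
  have hTne : T.Nonempty := ⟨(α v : ℕ), Finset.mem_image.mpr ⟨v, by simp [hvb], rfl⟩⟩
  set m := T.min' hTne with hm
  set M := T.max' hTne with hM
  have hTcard : T.card = (F b).ncard := by
    rw [Finset.card_image_of_injective _ (fun a c h => α.injective (Fin.val_injective h))]
    rw [Set.ncard_eq_toFinset_card']
    congr 1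
    ext z
    simp [Set.mem_toFinset]
  have hmM : m ≤ M := Finset.min'_le _ _ (Finset.max'_mem _ _)
  have hMn : M ≤ n - 1 := by
    obtain ⟨z, _, hz⟩ := Finset.mem_image.mp (T.max'_mem hTne)
    rw [← hM] at hz
    rw [← hz]; exact hpos_lt z
  have hkM : k + 1 ≤ M - m := by
    have hsubI : T ⊆ Finset.Icc m M :=
      fun j hj => Finset.mem_Icc.mpr ⟨Finset.min'_le _ _ hj, Finset.le_max' _ _ hj⟩
    have := (Finset.card_le_card hsubI).trans_eq (Nat.card_Icc m M)
    rw [hTcard] at this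
    omega
  -- rewrite the profile as a sum over cut positions
  have h1 : ordProfile G α =
      ∑ i ∈ Finset.range (n - 1),
        (Finset.univ.filter fun z : V => nbhdMin G α z ≤ i ∧ i < (α z : ℕ)).card := by
    have hz : ∀ z : V, (α z : ℕ) - nbhdMin G α z =
        ∑ i ∈ Finset.range (n - 1), if nbhdMin G α z ≤ i ∧ i < (α z : ℕ) then 1 else 0 := by
      intro z
      rw [← Finset.card_filter]
      have hf : (Finset.range (n - 1)).filter (fun i => nbhdMin G α z ≤ i ∧ i < (α z : ℕ))
          = Finset.Ico (nbhdMin G α z) ((α z : ℕ)) := by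
        ext i
        simp only [Finset.mem_filter, Finset.mem_range, Finset.mem_Ico]
        have := hpos_lt z
        omega
      rw [hf, Nat.card_Ico]
    calc ordProfile G α
        = ∑ z : V, ∑ i ∈ Finset.range (n - 1),
            if nbhdMin G α z ≤ i ∧ i < (α z : ℕ) then 1 else 0 :=
          Finset.sum_congr rfl fun z _ => hz z
      _ = ∑ i ∈ Finset.range (n - 1), ∑ z : V,
            if nbhdMin G α z ≤ i ∧ i < (α z : ℕ) then 1 else 0 := Finset.sum_comm
      _ = _ := Finset.sum_congr rfl fun i _ => (Finset.card_filter _ _).symm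
  rw [h1]
  -- every cut position contributes at least 1
  have hone : ∀ i ∈ Finset.range (n - 1),
      1 ≤ (Finset.univ.filter fun z : V => nbhdMin G α z ≤ i ∧ i < (α z : ℕ)).card := by
    intro i hi
    rw [Finset.mem_range] at hi
    obtain ⟨w⟩ := hG.preconnected x0 x1
    obtain ⟨a, c, hadj, _, hpa, hpc⟩ := aux_crossing (P := fun z => (α z : ℕ) ≤ i) w
      (by simp [hx0]) (by simp [hx1]; omega)
    refine Finset.card_pos.mpr ⟨c, Finset.mem_filter.mpr ⟨Finset.mem_univ _, ?_, by omega⟩⟩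
    exact le_trans (Nat.sInf_le ⟨a, Or.inr hadj, rfl⟩) hpa
  -- positions cutting F b contribute at least 2
  have htwo : ∀ i ∈ Finset.Ico m M,
      2 ≤ (Finset.univ.filter fun z : V => nbhdMin G α z ≤ i ∧ i < (α z : ℕ)).card := by
    intro i hi
    rw [Finset.mem_Ico] at hi
    obtain ⟨y0, hy0f, hy0p⟩ := Finset.mem_image.mp (T.min'_mem hTne)
    obtain ⟨y1, hy1f, hy1p⟩ := Finset.mem_image.mp (T.max'_mem hTne)
    rw [← hm] at hy0p
    rw [← hM] at hy1p
    have hy0b : y0 ∈ F b := (Finset.mem_filter.mp hy0f).2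
    have hy1b : y1 ∈ F b := (Finset.mem_filter.mp hy1f).2
    -- witness inside F b
    obtain ⟨w1⟩ := (hreachv y0 hy0b).trans (hreachv y1 hy1b).symm
    obtain ⟨a1, c1, hadj1, hr1, hpa1, hpc1⟩ := aux_crossing (P := fun z => (α z : ℕ) ≤ i) w1
      (by show (α y0 : ℕ) ≤ i; omega) (by show ¬ (α y1 : ℕ) ≤ i; omega)
    have hc1b : c1 ∈ F b := hr1.elim fun w => aux_walk_closed hclosed w hy0b
    -- witness outside F b
    obtain ⟨w2⟩ := (hreachu x0 hx0nb).trans (hreachu x1 hx1nb).symm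
    obtain ⟨a2, c2, hadj2, hr2, hpa2, hpc2⟩ := aux_crossing (P := fun z => (α z : ℕ) ≤ i) w2
      (by simp [hx0]) (by simp [hx1]; omega)
    have hx0c : x0 ∈ (F b)ᶜ := hx0nb
    have hc2b : c2 ∉ F b := hr2.elim fun w => aux_walk_closed hclosed' w hx0c
    have hmem : ∀ (a c : V), H.Adj a c → (α a : ℕ) ≤ i → ¬ (α c : ℕ) ≤ i →
        c ∈ Finset.univ.filter fun z : V => nbhdMin G α z ≤ i ∧ i < (α z : ℕ) := by
      intro a c hadj hpa hpc
      refine Finset.mem_filter.mpr ⟨Finset.mem_univ _, ?_, by omega⟩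
      exact le_trans (Nat.sInf_le ⟨a, Or.inr (SimpleGraph.deleteEdges_adj.mp hadj).1, rfl⟩) hpa
    have hsub2 : ({c1, c2} : Finset V) ⊆
        Finset.univ.filter fun z : V => nbhdMin G α z ≤ i ∧ i < (α z : ℕ) := by
      intro z hz
      rcases Finset.mem_insert.mp hz with h | h
      · rw [h]
        exact hmem a1 c1 hadj1 hpa1 hpc1
      · rw [Finset.mem_singleton] at h
        rw [h]
        exact hmem a2 c2 hadj2 hpa2 hpc2
    calc (2 : ℕ) = ({c1, c2} : Finset V).card :=
          (Finset.card_pair (fun h => hc2b (by rw [← h]; exact hc1b))).symm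
      _ ≤ _ := Finset.card_le_card hsub2
  -- combine
  have hsub : Finset.Ico m M ⊆ Finset.range (n - 1) := by
    intro i hi
    rw [Finset.mem_Ico] at hi
    rw [Finset.mem_range]
    omega
  calc n + k ≤ (Finset.range (n - 1) \ Finset.Ico m M).card * 1 + (Finset.Ico m M).card * 2 := by
        rw [Finset.card_sdiff_of_subset hsub, Nat.card_Ico, Finset.card_range]
        omega
    _ ≤ (∑ i ∈ Finset.range (n - 1) \ Finset.Ico m M,
          (Finset.univ.filter fun z : V => nbhdMin G α z ≤ i ∧ i < (α z : ℕ)).card)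
        + ∑ i ∈ Finset.Ico m M,
          (Finset.univ.filter fun z : V => nbhdMin G α z ≤ i ∧ i < (α z : ℕ)).card := by
        refine add_le_add ?_ ?_
        · simpa using Finset.card_nsmul_le_sum _ _ _
            (fun i hi => hone i (Finset.mem_sdiff.mp hi).1)
        · simpa using Finset.card_nsmul_le_sum _ _ _ htwo
    _ = _ := Finset.sum_sdiff hsub
end
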